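/- arXiv:1505.07429 — 4 statements merged into one kernel-verified Lean document; each statement's English description precedes it below -/
import Mathlib

section
/- For every integer m ≥ 1 there exist a set V of 2^m distinct real numbers and pairwise disjoint symmetric relations E₁, …, E_m on V whose union is exactly the set of all pairs of distinct points of V, such that: (1) each E_i is of the form E_i = {(u,v) ∈ V × V : u ≠ v and a_i < |u − v| < b_i} for some reals 0 ≤ a_i < b_i (hence each E_i is a semi-algebraic relation on ℝ of complexity at most 4), and (2) for every integer p ≥ 2, every p-element subset S ⊆ V induces at least ⌈log p⌉ distinct relations, i.e., the number of indices i for which some pair of distinct points of S lies in E_i is at least ⌈log p⌉. Consequently, f_{1,4}(n, p, ⌈log p⌉) ≤ O(log n). (Here log denotes the logarithm in base 2.) -/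
/-!
Identify the `2^m` points with the bit vectors `c : Fin m → Bool`, placed at `∑ cₖ 4^k`, and
colour a pair by the highest bit in which its endpoints differ. If that bit is `j`, the lower
bits contribute less than `∑_{k<j} 4^k < 4^j / 2`, so the distance lies in the band
`(4^j / 2, 2 · 4^j)`; these bands are pairwise disjoint, so each colour class is a distance
band. If a set `S` of points uses only the colours in `L`, then any two of its points differ in a
bit of `L`, so restricting to `L` is injective on `S` and `|S| ≤ 2^|L|`.
-/

open scoped Classical

open Finset Function

namespace LayeredColoring

def band (i : ℕ) : Set ℝ := Set.Ioo (4 ^ i / 2) (2 * 4 ^ i)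

lemma pairwise_disjoint_band : Pairwise (Disjoint on band) := by
  suffices h : ∀ i j, i < j → Disjoint (band i) (band j) from fun i j hij =>
    hij.lt_or_gt.elim (h i j) fun hji => (h j i hji).symm
  intro i j hij
  have hpow : (4 : ℝ) ^ (i + 1) ≤ 4 ^ j := pow_le_pow_right₀ (by norm_num) hij
  rw [pow_succ] at hpow
  exact Set.disjoint_left.2 fun x hi hj => by linarith [hi.2, hj.1]

lemma geom_sum_four_lt (j : ℕ) : ∑ n ∈ range j, (4 : ℝ) ^ n < 4 ^ j / 2 := by
  have : (1 : ℝ) ≤ 4 ^ j := one_le_pow₀ (by norm_num)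
  rw [geom_sum_eq (by norm_num)]
  norm_num
  linarith

section DigitSums

variable {m : ℕ} {e : Fin m → ℝ}

lemma abs_sum_Iio_lt (he : ∀ k, |e k| ≤ 1) (j : Fin m) :
    |∑ k ∈ Iio j, e k * 4 ^ (k : ℕ)| < 4 ^ (j : ℕ) / 2 :=
  calc |∑ k ∈ Iio j, e k * 4 ^ (k : ℕ)|
      ≤ ∑ k ∈ Iio j, (4 : ℝ) ^ (k : ℕ) := by
        refine (abs_sum_le_sum_abs _ _).trans (sum_le_sum fun k _ => ?_)
        rw [abs_mul, abs_of_pos (by positivity : (0 : ℝ) < 4 ^ (k : ℕ))]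
        exact mul_le_of_le_one_left (by positivity) (he k)
    _ = ∑ n ∈ range j, (4 : ℝ) ^ n := by
        rw [← Nat.Iio_eq_range, ← Fin.map_valEmbedding_Iio, sum_map]
        rfl
    _ < 4 ^ (j : ℕ) / 2 := geom_sum_four_lt j

lemma abs_sum_mem_band (he : ∀ k, |e k| ≤ 1) {j : Fin m} (hj : |e j| = 1)
    (hgt : ∀ k, j < k → e k = 0) : |∑ k, e k * 4 ^ (k : ℕ)| ∈ band j := by
  have hsplit : ∑ k, e k * 4 ^ (k : ℕ) = e j * 4 ^ (j : ℕ) + ∑ k ∈ Iio j, e k * 4 ^ (k : ℕ) := by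
    rw [← sum_subset (subset_univ (Iic j)) fun k _ hk => by
      rw [hgt k (not_le.1 (mem_Iic.not.1 hk)), zero_mul], ← Iio_insert, sum_insert notMem_Iio_self]
  have hlead : |e j * 4 ^ (j : ℕ)| = 4 ^ (j : ℕ) := by
    rw [abs_mul, hj, one_mul, abs_of_pos (by positivity)]
  have hrest := abs_sum_Iio_lt he j
  have hpos : (0 : ℝ) < 4 ^ (j : ℕ) := by positivity
  rw [hsplit]
  constructor
  · linarith [abs_sub_abs_le_abs_add (e j * 4 ^ (j : ℕ)) (∑ k ∈ Iio j, e k * 4 ^ (k : ℕ))]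
  · linarith [abs_add_le (e j * 4 ^ (j : ℕ)) (∑ k ∈ Iio j, e k * 4 ^ (k : ℕ))]

end DigitSums

lemma exists_greatest_ne {ι β : Type*} [Fintype ι] [LinearOrder ι] {c d : ι → β} (h : c ≠ d) :
    ∃ j, c j ≠ d j ∧ ∀ k, j < k → c k = d k := by
  have hne : (univ.filter fun k => c k ≠ d k).Nonempty := by
    obtain ⟨k, hk⟩ := Function.ne_iff.1 h
    exact ⟨k, mem_filter.2 ⟨mem_univ k, hk⟩⟩
  refine ⟨_, (mem_filter.1 (max'_mem _ hne)).2, fun k hk => ?_⟩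
  by_contra hck
  exact (le_max' _ k (mem_filter.2 ⟨mem_univ k, hck⟩)).not_gt hk

lemma card_le_pow_card_of_separating {ι β : Type*} [Fintype β] {A : Finset (ι → β)}
    {L : Finset ι} (h : ∀ c ∈ A, ∀ d ∈ A, c ≠ d → ∃ i ∈ L, c i ≠ d i) :
    #A ≤ Fintype.card β ^ #L := by
  have hinj : Set.InjOn (fun (c : ι → β) (i : L) => c i) A := fun c hc d hd hcd => by
    by_contra hne
    obtain ⟨i, hi, hcdi⟩ := h c hc d hd hne
    exact hcdi (congrFun hcd ⟨i, hi⟩)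
  simpa using card_le_card_of_injOn _ (fun c _ => mem_univ _) hinj

section BitVectors

variable {m : ℕ}

noncomputable def baseFour (c : Fin m → Bool) : ℝ := ∑ k, ((c k).toNat : ℝ) * 4 ^ (k : ℕ)

lemma abs_sub_mem_band {c d : Fin m → Bool} {j : Fin m} (hj : c j ≠ d j)
    (hgt : ∀ k, j < k → c k = d k) : |baseFour c - baseFour d| ∈ band j := by
  have hdiff : baseFour c - baseFour d = ∑ k, ((c k).toNat - (d k).toNat : ℝ) * 4 ^ (k : ℕ) := by
    simp only [baseFour, ← sum_sub_distrib, sub_mul]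
  rw [hdiff]
  refine abs_sum_mem_band (fun k => ?_) ?_ fun k hk => by rw [hgt k hk, sub_self]
  · cases c k <;> cases d k <;> norm_num
  · revert hj
    cases c j <;> cases d j <;> norm_num

lemma baseFour_injective : Function.Injective (baseFour (m := m)) := by
  intro c d hcd
  by_contra h
  obtain ⟨j, hj, hgt⟩ := exists_greatest_ne h
  have := (abs_sub_mem_band hj hgt).1
  rw [hcd, sub_self, abs_zero] at this
  linarith [(by positivity : (0 : ℝ) < 4 ^ (j : ℕ) / 2)]

lemma card_le_two_pow_card_bands {S : Finset ℝ} (hS : S ⊆ univ.image (baseFour (m := m))) :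
    #S ≤ 2 ^ #(univ.filter fun i : Fin m => ∃ u ∈ S, ∃ v ∈ S, u ≠ v ∧ |u - v| ∈ band i) := by
  set A := univ.filter fun c : Fin m → Bool => baseFour c ∈ S
  have hSA : S ⊆ A.image baseFour := fun u hu => by
    obtain ⟨c, -, rfl⟩ := mem_image.1 (hS hu)
    exact mem_image.2 ⟨c, mem_filter.2 ⟨mem_univ c, hu⟩, rfl⟩
  refine (card_le_card hSA).trans (card_image_le.trans ?_)
  rw [← Fintype.card_bool]
  exact card_le_pow_card_of_separating fun c hc d hd hcd => by
    obtain ⟨j, hj, hgt⟩ := exists_greatest_ne hcd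
    exact ⟨j, mem_filter.2 ⟨mem_univ j, _, (mem_filter.1 hc).2, _, (mem_filter.1 hd).2,
      baseFour_injective.ne hcd, abs_sub_mem_band hj hgt⟩, hj⟩

end BitVectors

end LayeredColoring

open LayeredColoring in
theorem layered_coloring_construction_general (m : ℕ) :
    ∃ (V : Finset ℝ) (a b : Fin m → ℝ),
      V.card = 2 ^ m ∧
      (∀ i, 0 ≤ a i ∧ a i < b i) ∧
      -- the relations are pairwise disjoint on `V`
      (∀ i j : Fin m, i ≠ j → ∀ u ∈ V, ∀ v ∈ V,
        ¬((a i < |u - v| ∧ |u - v| < b i) ∧ (a j < |u - v| ∧ |u - v| < b j))) ∧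
      -- their union covers all pairs of distinct points of `V`
      (∀ u ∈ V, ∀ v ∈ V, u ≠ v → ∃ i : Fin m, a i < |u - v| ∧ |u - v| < b i) ∧
      -- every `p`-element subset induces at least `⌈log p⌉` distinct relations
      (∀ p : ℕ, 2 ≤ p → ∀ S ⊆ V, S.card = p →
        Nat.clog 2 p ≤
          ((Finset.univ : Finset (Fin m)).filter fun i =>
            ∃ u ∈ S, ∃ v ∈ S, u ≠ v ∧ a i < |u - v| ∧ |u - v| < b i).card) := by
  refine ⟨univ.image (baseFour (m := m)), fun i => 4 ^ (i : ℕ) / 2, fun i => 2 * 4 ^ (i : ℕ),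
    ?_, fun i => ⟨by positivity, by
      linarith [(by positivity : (0 : ℝ) < 4 ^ (i : ℕ))]⟩, ?_, ?_, ?_⟩
  · simp [card_image_of_injective _ baseFour_injective]
  · intro i j hij u _ v _ huv
    exact Set.disjoint_left.1 (pairwise_disjoint_band (Fin.val_injective.ne hij)) huv.1 huv.2
  · simp only [mem_image, mem_univ, true_and]
    rintro _ ⟨c, rfl⟩ _ ⟨d, rfl⟩ hcd
    obtain ⟨j, hj, hgt⟩ := exists_greatest_ne (ne_of_apply_ne _ hcd)
    exact ⟨j, abs_sub_mem_band hj hgt⟩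
  · rintro p - S hS rfl
    rw [Nat.clog_le_iff_le_pow one_lt_two]
    simpa only [band, Set.mem_Ioo] using card_le_two_pow_card_bands hS

/-- Construction for the upper bound in Theorem 1.5: for every `m ≥ 1` there is a set
`V` of `2^m` reals and pairwise disjoint symmetric relations `E₁, …, E_m`, each of the
form `E_i = {(u,v) : u ≠ v ∧ a_i < |u - v| < b_i}` with `0 ≤ a_i < b_i` (hence
semi-algebraic of complexity at most 4), whose union is exactly the pairs of distinct
points of `V`, such that every `p`-element subset of `V` (for any `p ≥ 2`) induces at
least `⌈log p⌉` distinct relations.  (Logs are base 2.) -/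
theorem layered_coloring_construction (m : ℕ) (hm : 1 ≤ m) :
    ∃ (V : Finset ℝ) (a b : Fin m → ℝ),
      V.card = 2 ^ m ∧
      (∀ i, 0 ≤ a i ∧ a i < b i) ∧
      -- the relations are pairwise disjoint on `V`
      (∀ i j : Fin m, i ≠ j → ∀ u ∈ V, ∀ v ∈ V,
        ¬((a i < |u - v| ∧ |u - v| < b i) ∧ (a j < |u - v| ∧ |u - v| < b j))) ∧
      -- their union covers all pairs of distinct points of `V`
      (∀ u ∈ V, ∀ v ∈ V, u ≠ v → ∃ i : Fin m, a i < |u - v| ∧ |u - v| < b i) ∧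
      -- every `p`-element subset induces at least `⌈log p⌉` distinct relations
      (∀ p : ℕ, 2 ≤ p → ∀ S ⊆ V, S.card = p →
        Nat.clog 2 p ≤
          ((Finset.univ : Finset (Fin m)).filter fun i =>
            ∃ u ∈ S, ∃ v ∈ S, u ≠ v ∧ a i < |u - v| ∧ |u - v| < b i).card) :=
  layered_coloring_construction_general m
end

section
/- Let r ≥ 1 and let V ⊆ ℝ² be a finite set with |V| ≥ 2r + 4. For points a, b, x, y ∈ ℝ², say Q(ab, xy) holds if a, b, x, y are pairwise distinct and ‖a − x‖ = ‖b − y‖ or ‖a − y‖ = ‖b − x‖. Suppose u₁, u₂, u₃, u₄ ∈ V and v₁, …, v_{2r} ∈ V are such that v₁, …, v_{2r} are pairwise distinct, for every odd i ∈ {1, 3, …, 2r−1} both Q(u₁u₂, v_i v_{i+1}) and Q(u₃u₄, v_i v_{i+1}) hold, and either u₁, u₂, u₃, u₄ are pairwise distinct, or u₂ = u₃ and u₁, u₂, u₄ are pairwise distinct. Then there exist 2r + 4 distinct points in V that determine at most C(2r+4, 2) − 2r distinct distances. -/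
open scoped Classical

/-- The number of distinct distances determined by a finite planar point set `P`. -/
noncomputable def distinctDists (P : Finset (EuclideanSpace ℝ (Fin 2))) : ℕ :=
  (((P ×ˢ P).filter fun q => q.1 ≠ q.2).image fun q => dist q.1 q.2).card

/-- `Q(ab, xy)` holds if the four points are pairwise distinct and
`‖a - x‖ = ‖b - y‖` or `‖a - y‖ = ‖b - x‖`. -/
def QRel (a b x y : EuclideanSpace ℝ (Fin 2)) : Prop :=
  (a ≠ b ∧ a ≠ x ∧ a ≠ y ∧ b ≠ x ∧ b ≠ y ∧ x ≠ y) ∧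
    (dist a x = dist b y ∨ dist a y = dist b x)

/-!
Take `T ⊇ {u₁, u₂, u₃, u₄, v₁, …, v_{2r}}` inside `V` with `|T| = 2r + 4`. For each odd `i`,
`Q(u₁u₂, v_i v_{i+1})` gives an edge at `u₁` into `{v_i, v_{i+1}}` whose length is repeated by the
complementary edge at `u₂`, and `Q(u₃u₄, v_i v_{i+1})` does the same for `u₄` and `u₃`. These `2r`
edges at `u₁` and `u₄` are distinct, and their partners at `u₂`, `u₃ ∉ {u₁, u₄}` are not among
them, so the distances of `T` are already realised by the remaining `C(2r+4, 2) - 2r` pairs.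
-/
open Function Finset

local notation "ℝ²" => EuclideanSpace ℝ (Fin 2)

theorem Finset.card_image_le_card_sdiff_of_forall_exists {α β : Type*} [DecidableEq α]
    [DecidableEq β] {U R : Finset α} {f : α → β} (h : ∀ a ∈ R, ∃ b ∈ U \ R, f b = f a) :
    #(U.image f) ≤ #(U \ R) := by
  refine (card_le_card (t := (U \ R).image f) fun d hd => ?_).trans card_image_le
  obtain ⟨a, haU, rfl⟩ := mem_image.1 hd
  by_cases haR : a ∈ R
  · obtain ⟨b, hb, hba⟩ := h a haR
    exact mem_image.2 ⟨b, hb, hba⟩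
  · exact mem_image_of_mem f (mem_sdiff.2 ⟨haU, haR⟩)

noncomputable def sym2Dist {α : Type*} [PseudoMetricSpace α] : Sym2 α → ℝ :=
  Sym2.lift ⟨dist, dist_comm⟩

@[simp]
theorem sym2Dist_mk {α : Type*} [PseudoMetricSpace α] (a b : α) : sym2Dist s(a, b) = dist a b :=
  rfl

theorem distinctDists_eq_card_image_sym2Dist (T : Finset ℝ²) :
    distinctDists T = #((T.offDiag.image Sym2.mk.uncurry).image sym2Dist) := by
  rw [distinctDists, image_image]
  congr 2
  ext q
  simp [and_assoc]

theorem distinctDists_le_choose_sub_card (T : Finset ℝ²) (R : Finset (Sym2 ℝ²))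
    (hR : R ⊆ T.offDiag.image Sym2.mk.uncurry)
    (h : ∀ p ∈ R, ∃ q ∈ T.offDiag.image Sym2.mk.uncurry \ R, sym2Dist q = sym2Dist p) :
    distinctDists T ≤ (#T).choose 2 - #R := by
  rw [distinctDists_eq_card_image_sym2Dist, ← Sym2.card_image_offDiag, ← card_sdiff_of_subset hR]
  exact card_image_le_card_sdiff_of_forall_exists h

theorem QRel.exists_dist_eq {a b : ℝ²} (p : Bool → ℝ²) (h : QRel a b (p false) (p true)) :
    ∃ c, dist a (p c) = dist b (p !c) := by
  rcases h.2 with h | h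
  exacts [⟨false, h⟩, ⟨true, h⟩]

section StarEdges

variable {α ι : Type*} [DecidableEq α] [Fintype ι]

def starEdges (a : α) (z : ι → α) : Finset (Sym2 α) :=
  univ.image fun i => s(a, z i)

@[simp]
theorem mem_starEdges {a : α} {z : ι → α} {p : Sym2 α} :
    p ∈ starEdges a z ↔ ∃ i, s(a, z i) = p := by
  simp [starEdges]

theorem card_starEdges (a : α) {z : ι → α} (hz : Injective z) :
    #(starEdges a z) = Fintype.card ι := by
  rw [starEdges, card_image_of_injective _ fun i j hij => hz (Sym2.congr_right.1 hij), card_univ]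

theorem mk_notMem_starEdges {a x : α} {z : ι → α} (hxa : x ≠ a) (hxz : ∀ i, x ≠ z i) (y : α) :
    s(x, y) ∉ starEdges a z := by
  rw [mem_starEdges, not_exists]
  intro i h
  rcases Sym2.eq_iff.1 h with ⟨h, -⟩ | ⟨-, h⟩
  exacts [hxa h.symm, hxz i h.symm]

theorem disjoint_starEdges {a b : α} {z z' : ι → α} (hab : a ≠ b) (hbz : ∀ i, b ≠ z i) :
    Disjoint (starEdges a z) (starEdges b z') := by
  refine disjoint_left.2 fun p hpa hpb => ?_
  obtain ⟨i, rfl⟩ := mem_starEdges.1 hpa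
  obtain ⟨j, h⟩ := mem_starEdges.1 hpb
  rcases Sym2.eq_iff.1 h with ⟨h, -⟩ | ⟨h, -⟩
  exacts [hab h.symm, hbz i h]

end StarEdges

theorem distinctDists_le_of_forall_QRel {ι : Type*} [Fintype ι] (T : Finset ℝ²)
    {a₁ a₂ a₃ a₄ : ℝ²} (haT : {a₁, a₂, a₃, a₄} ⊆ T) (h13 : a₁ ≠ a₃) (h14 : a₁ ≠ a₄)
    (h24 : a₂ ≠ a₄) (e : ι × Bool → ℝ²) (he : Injective e) (heT : ∀ k, e k ∈ T)
    (hQ : ∀ i, QRel a₁ a₂ (e (i, false)) (e (i, true)) ∧ QRel a₃ a₄ (e (i, false)) (e (i, true))) :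
    distinctDists T ≤ (#T).choose 2 - 2 * Fintype.card ι := by
  have ha : a₁ ∈ T ∧ a₂ ∈ T ∧ a₃ ∈ T ∧ a₄ ∈ T := by simpa [insert_subset_iff] using haT
  have hne : ∀ k, a₁ ≠ e k ∧ a₂ ≠ e k ∧ a₃ ≠ e k ∧ a₄ ≠ e k := by
    rintro ⟨i, _ | _⟩ <;>
      obtain ⟨⟨⟨-, h₁, h₁', h₂, h₂', -⟩, -⟩, ⟨-, h₃, h₃', h₄, h₄', -⟩, -⟩ := hQ i
    exacts [⟨h₁, h₂, h₃, h₄⟩, ⟨h₁', h₂', h₃', h₄'⟩]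
  have hpair : ∀ a k, a ∈ T → a ≠ e k → s(a, e k) ∈ T.offDiag.image Sym2.mk.uncurry :=
    fun a k ha hak => mem_image_of_mem _ (mem_offDiag.2 ⟨ha, heT k, hak⟩)
  have hinj : ∀ d : ι → Bool, Injective fun i => e (i, d i) :=
    fun d i j hij => congrArg Prod.fst (he hij)
  choose c hc using fun i => (hQ i).1.exists_dist_eq fun b => e (i, b)
  choose c' hc' using fun i => (hQ i).2.exists_dist_eq fun b => e (i, b)
  set R := starEdges a₁ (fun i => e (i, c i)) ∪ starEdges a₄ (fun i => e (i, !c' i))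
  have hRcard : #R = 2 * Fintype.card ι := by
    rw [card_union_of_disjoint (disjoint_starEdges h14 fun _ => (hne _).2.2.2),
      card_starEdges _ (hinj _), card_starEdges _ (hinj _), two_mul]
  have hR : ∀ a, a ≠ a₁ → a ≠ a₄ → (∀ k, a ≠ e k) → ∀ b, s(a, b) ∉ R := fun a h1 h4 hae b =>
    notMem_union.2 ⟨mk_notMem_starEdges h1 (fun _ => hae _) b,
      mk_notMem_starEdges h4 (fun _ => hae _) b⟩
  calc distinctDists T ≤ (#T).choose 2 - #R := by
        refine distinctDists_le_choose_sub_card T R (fun p hp => ?_) fun p hp => ?_ <;>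
          simp only [R, mem_union, mem_starEdges] at hp <;>
          rcases hp with ⟨i, rfl⟩ | ⟨i, rfl⟩
        · exact hpair _ _ ha.1 (hne _).1
        · exact hpair _ _ ha.2.2.2 (hne _).2.2.2
        · refine ⟨s(a₂, e (i, !c i)), mem_sdiff.2 ⟨hpair _ _ ha.2.1 (hne _).2.1, ?_⟩, ?_⟩
          · exact hR _ (hQ i).1.1.1.symm h24 (fun k => (hne k).2.1) _
          · simp [hc i]
        · refine ⟨s(a₃, e (i, c' i)), mem_sdiff.2 ⟨hpair _ _ ha.2.2.1 (hne _).2.2.1, ?_⟩, ?_⟩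
          · exact hR _ h13.symm (hQ i).2.1.1 (fun k => (hne k).2.2.1) _
          · simp [hc' i]
    _ = (#T).choose 2 - 2 * Fintype.card ι := by rw [hRcard]

/-- Observation 5.6: if `(u₁u₂, v_i v_{i+1})` and `(u₃u₄, v_i v_{i+1})` satisfy `Q`
for every odd `i ≤ 2r - 1`, where `v₁, …, v_{2r} ∈ V` are pairwise distinct and either
`u₁, u₂, u₃, u₄ ∈ V` are pairwise distinct or `u₂ = u₃` with `u₁, u₂, u₄` pairwise
distinct, then some `2r + 4` distinct points of `V` determine at most
`C(2r+4, 2) - 2r` distinct distances. -/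
theorem K2r_repeated_distances (r : ℕ)
    (V : Finset (EuclideanSpace ℝ (Fin 2))) (hV : 2 * r + 4 ≤ V.card)
    (u₁ u₂ u₃ u₄ : EuclideanSpace ℝ (Fin 2))
    (hu₁ : u₁ ∈ V) (hu₂ : u₂ ∈ V) (hu₃ : u₃ ∈ V) (hu₄ : u₄ ∈ V)
    (v : Fin (2 * r) → EuclideanSpace ℝ (Fin 2))
    (hvV : ∀ i, v i ∈ V) (hvinj : Function.Injective v)
    (hQ : ∀ i : Fin r,
      QRel u₁ u₂ (v ⟨2 * i.1, by have := i.isLt; omega⟩)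
        (v ⟨2 * i.1 + 1, by have := i.isLt; omega⟩) ∧
      QRel u₃ u₄ (v ⟨2 * i.1, by have := i.isLt; omega⟩)
        (v ⟨2 * i.1 + 1, by have := i.isLt; omega⟩))
    (hcase :
      (u₁ ≠ u₂ ∧ u₁ ≠ u₃ ∧ u₁ ≠ u₄ ∧ u₂ ≠ u₃ ∧ u₂ ≠ u₄ ∧ u₃ ≠ u₄) ∨
      (u₂ = u₃ ∧ u₁ ≠ u₂ ∧ u₁ ≠ u₄ ∧ u₂ ≠ u₄)) :
    ∃ T ⊆ V, T.card = 2 * r + 4 ∧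
      distinctDists T ≤ (2 * r + 4).choose 2 - 2 * r := by
  obtain ⟨h13, h14, h24⟩ : u₁ ≠ u₃ ∧ u₁ ≠ u₄ ∧ u₂ ≠ u₄ := by
    rcases hcase with ⟨-, h13, h14, -, h24, -⟩ | ⟨rfl, h12, h14, h24⟩
    exacts [⟨h13, h14, h24⟩, ⟨h12, h14, h24⟩]
  let e : Fin r × Bool → ℝ² := fun k =>
    v ⟨2 * k.1 + k.2.toNat, by have := k.1.isLt; have := k.2.toNat_le; omega⟩
  have he : Injective e := by
    rintro ⟨i, b⟩ ⟨j, b'⟩ h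
    have := Fin.val_eq_of_eq (hvinj h)
    cases b <;> cases b' <;>
      simp only [Bool.toNat_false, Bool.toNat_true, Prod.mk.injEq, Fin.ext_iff, reduceCtorEq,
        and_true, and_false] at this ⊢ <;> omega
  set T₀ := {u₁, u₂, u₃, u₄} ∪ univ.image v
  have hT₀V : T₀ ⊆ V := union_subset
    (by simp [insert_subset_iff, hu₁, hu₂, hu₃, hu₄]) (image_subset_iff.2 fun i _ => hvV i)
  have hT₀card : #T₀ ≤ 2 * r + 4 := calc
    #T₀ ≤ 4 + 2 * r := (card_union_le _ _).trans <| add_le_add card_le_four <|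
      card_image_le.trans_eq (by rw [card_univ, Fintype.card_fin])
    _ = 2 * r + 4 := add_comm _ _
  obtain ⟨T, hT₀T, hTV, hTcard⟩ := exists_subsuperset_card_eq hT₀V hT₀card hV
  refine ⟨T, hTV, hTcard, ?_⟩
  simpa [hTcard] using distinctDists_le_of_forall_QRel T (subset_union_left.trans hT₀T) h13 h14 h24
    e he (fun k => hT₀T (mem_union_right _ (mem_image_of_mem v (mem_univ _)))) hQ
end

section
/- Let p ≥ 4 be an integer and let V be an n-element point set in the plane ℝ² with n ≥ p, such that every p-element subset of V determines at least C(p,2) − ⌊p/2⌋ + 2 distinct distances. Then every distance value occurs at most ⌊p/2⌋ − 1 times among the unordered pairs of distinct points of V, and consequently V determines at least C(n,2)/(⌊p/2⌋ − 1) = Ω(n²) distinct distances. -/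
open scoped Classical

noncomputable def pairDist (s : Finset (EuclideanSpace ℝ (Fin 2))) : ℝ :=
  if h : ∃ q : EuclideanSpace ℝ (Fin 2) × EuclideanSpace ℝ (Fin 2),
      q.1 ∈ s ∧ q.2 ∈ s ∧ q.1 ≠ q.2
  then dist h.choose.1 h.choose.2 else 0

lemma pairDist_pair {u v : EuclideanSpace ℝ (Fin 2)} (huv : u ≠ v) :
    pairDist {u, v} = dist u v := by
  have hex : ∃ q : EuclideanSpace ℝ (Fin 2) × EuclideanSpace ℝ (Fin 2),
      q.1 ∈ ({u, v} : Finset _) ∧ q.2 ∈ ({u, v} : Finset _) ∧ q.1 ≠ q.2 :=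
    ⟨(u, v), by simp, by simp, huv⟩
  rw [pairDist, dif_pos hex]
  obtain ⟨h1, h2, h3⟩ := hex.choose_spec
  simp only [Finset.mem_insert, Finset.mem_singleton] at h1 h2
  rcases h1 with h1 | h1 <;> rcases h2 with h2 | h2 <;>
    simp_all [dist_comm]

lemma pairDist_eq {t : Finset (EuclideanSpace ℝ (Fin 2))}
    {u v : EuclideanSpace ℝ (Fin 2)} (ht : t.card = 2) (hu : u ∈ t) (hv : v ∈ t)
    (huv : u ≠ v) : pairDist t = dist u v := by
  have hsub : ({u, v} : Finset _) ⊆ t := by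
    intro x hx; simp only [Finset.mem_insert, Finset.mem_singleton] at hx
    rcases hx with rfl | rfl <;> assumption
  have hcard : ({u, v} : Finset _).card = 2 := Finset.card_pair huv
  have : t = ({u, v} : Finset _) :=
    (Finset.eq_of_subset_of_card_le hsub (by omega)).symm
  rw [this, pairDist_pair huv]

/-- If every `p`-element subset of an `n`-element planar point set `V` (with
`4 ≤ p ≤ n`) determines at least `C(p,2) - ⌊p/2⌋ + 2` distinct distances, then every
distance value occurs at most `⌊p/2⌋ - 1` times among the pairs of distinct points of
`V`, and consequently `V` determines at least `C(n,2)/(⌊p/2⌋ - 1)` distinct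
distances. -/
theorem quadratic_distinct_distances (p n : ℕ) (hp : 4 ≤ p)
    (V : Finset (EuclideanSpace ℝ (Fin 2))) (hV : V.card = n) (hn : p ≤ n)
    (h : ∀ S ⊆ V, S.card = p →
      p.choose 2 - p / 2 + 2 ≤ distinctDists S) :
    (∀ δ : ℝ, 0 < δ →
      ((V.powersetCard 2).filter fun S =>
        ∃ u ∈ S, ∃ v ∈ S, u ≠ v ∧ dist u v = δ).card ≤ p / 2 - 1) ∧
    ((n.choose 2 : ℝ) / ((p / 2 - 1 : ℕ) : ℝ) ≤ (distinctDists V : ℝ)) := by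
  have hk2 : 2 ≤ p / 2 := by omega
  -- Part 1, without the positivity hypothesis
  have part1 : ∀ δ : ℝ,
      ((V.powersetCard 2).filter fun S =>
        ∃ u ∈ S, ∃ v ∈ S, u ≠ v ∧ dist u v = δ).card ≤ p / 2 - 1 := by
    intro δ
    by_contra hcon
    push_neg at hcon
    have hge : p / 2 ≤ ((V.powersetCard 2).filter fun S =>
        ∃ u ∈ S, ∃ v ∈ S, u ≠ v ∧ dist u v = δ).card := by omega
    obtain ⟨T, hT, hTcard⟩ := Finset.exists_subset_card_eq hge
    set U : Finset (EuclideanSpace ℝ (Fin 2)) := T.sup id with hU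
    have hTmem : ∀ t ∈ T, t ⊆ V ∧ t.card = 2 ∧
        ∃ u ∈ t, ∃ v ∈ t, u ≠ v ∧ dist u v = δ := by
      intro t ht
      have := hT ht
      rw [Finset.mem_filter, Finset.mem_powersetCard] at this
      exact ⟨this.1.1, this.1.2, this.2⟩
    have hUV : U ⊆ V := Finset.sup_le fun t ht => (hTmem t ht).1
    have hUcard : U.card ≤ p := by
      have h1 : U.card ≤ ∑ t ∈ T, (id t).card := by
        rw [hU, Finset.sup_eq_biUnion]
        exact Finset.card_biUnion_le
      have h2 : ∑ t ∈ T, (id t).card = 2 * (p / 2) := by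
        simp only [id_eq]
        rw [Finset.sum_congr rfl fun t ht => (hTmem t ht).2.1, Finset.sum_const,
          hTcard, smul_eq_mul, Nat.mul_comm]
      omega
    obtain ⟨S, hUS, hSV, hScard⟩ :=
      Finset.exists_subsuperset_card_eq hUV hUcard (by omega : p ≤ V.card)
    have hTS : T ⊆ S.powersetCard 2 := by
      intro t ht
      rw [Finset.mem_powersetCard]
      refine ⟨Finset.Subset.trans ?_ hUS, (hTmem t ht).2.1⟩
      exact Finset.le_sup (f := id) ht
    -- every t ∈ T has pairDist t = δ
    have hTδ : ∀ t ∈ T, pairDist t = δ := by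
      intro t ht
      obtain ⟨-, htc, u, hu, v, hv, huv, hd⟩ := hTmem t ht
      rw [pairDist_eq htc hu hv huv, hd]
    -- bound distinctDists S
    have hsub : (((S ×ˢ S).filter fun q => q.1 ≠ q.2).image fun q => dist q.1 q.2) ⊆
        insert δ ((S.powersetCard 2 \ T).image pairDist) := by
      intro d hd
      rw [Finset.mem_image] at hd
      obtain ⟨q, hq, rfl⟩ := hd
      rw [Finset.mem_filter, Finset.mem_product] at hq
      obtain ⟨⟨h1, h2⟩, hne⟩ := hq
      set s : Finset (EuclideanSpace ℝ (Fin 2)) := {q.1, q.2} with hs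
      have hsc : s.card = 2 := Finset.card_pair hne
      have hsp : s ∈ S.powersetCard 2 := by
        rw [Finset.mem_powersetCard]
        refine ⟨?_, hsc⟩
        intro x hx
        simp only [hs, Finset.mem_insert, Finset.mem_singleton] at hx
        rcases hx with rfl | rfl <;> assumption
      have hpd : pairDist s = dist q.1 q.2 := pairDist_pair hne
      by_cases hsT : s ∈ T
      · rw [Finset.mem_insert]
        left
        rw [← hpd, hTδ s hsT]
      · rw [Finset.mem_insert]
        right
        exact Finset.mem_image.2 ⟨s, Finset.mem_sdiff.2 ⟨hsp, hsT⟩, hpd⟩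
    have hb : distinctDists S ≤ 1 + (p.choose 2 - p / 2) := by
      calc distinctDists S ≤ (insert δ ((S.powersetCard 2 \ T).image pairDist)).card :=
            Finset.card_le_card hsub
        _ ≤ 1 + ((S.powersetCard 2 \ T).image pairDist).card := by
            rw [add_comm]; exact Finset.card_insert_le _ _
        _ ≤ 1 + (S.powersetCard 2 \ T).card := by
            gcongr; exact Finset.card_image_le
        _ = 1 + (p.choose 2 - p / 2) := by
            rw [Finset.card_sdiff_of_subset hTS, Finset.card_powersetCard, hScard, hTcard]
    have hlb := h S hSV hScard
    have hch : p / 2 ≤ p.choose 2 := by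
      have h2 : p.choose 2 = p * (p - 1) / 2 := Nat.choose_two_right p
      have := Nat.div_le_div_right (c := 2) (Nat.le_mul_of_pos_right p (by omega : 0 < p - 1))
      omega
    omega
  refine ⟨fun δ _ => part1 δ, ?_⟩
  -- Part 2
  have hfib : ∀ a ∈ (V.powersetCard 2).image pairDist,
      ((V.powersetCard 2).filter fun s => pairDist s = a).card ≤ p / 2 - 1 := by
    intro a _
    refine le_trans (Finset.card_le_card ?_) (part1 a)
    intro s hs
    rw [Finset.mem_filter] at hs ⊢
    obtain ⟨hsp, hpd⟩ := hs
    refine ⟨hsp, ?_⟩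
    rw [Finset.mem_powersetCard] at hsp
    obtain ⟨u, v, huv, rfl⟩ := Finset.card_eq_two.1 hsp.2
    exact ⟨u, by simp, v, by simp, huv, by rw [← hpd, pairDist_pair huv]⟩
  have hmain : (V.powersetCard 2).card ≤ (p / 2 - 1) * ((V.powersetCard 2).image pairDist).card :=
    Finset.card_le_mul_card_image _ _ hfib
  have himg : (V.powersetCard 2).image pairDist ⊆
      ((V ×ˢ V).filter fun q => q.1 ≠ q.2).image fun q => dist q.1 q.2 := by
    intro a ha
    rw [Finset.mem_image] at ha
    obtain ⟨s, hs, rfl⟩ := ha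
    rw [Finset.mem_powersetCard] at hs
    obtain ⟨u, v, huv, rfl⟩ := Finset.card_eq_two.1 hs.2
    refine Finset.mem_image.2 ⟨(u, v), ?_, (pairDist_pair huv).symm⟩
    rw [Finset.mem_filter, Finset.mem_product]
    exact ⟨⟨hs.1 (by simp), hs.1 (by simp)⟩, huv⟩
  have hnat : n.choose 2 ≤ (p / 2 - 1) * distinctDists V := by
    calc n.choose 2 = (V.powersetCard 2).card := by rw [Finset.card_powersetCard, hV]
      _ ≤ (p / 2 - 1) * ((V.powersetCard 2).image pairDist).card := hmain
      _ ≤ (p / 2 - 1) * distinctDists V := by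
          gcongr; exact Finset.card_le_card himg
  have hkpos : (0 : ℝ) < ((p / 2 - 1 : ℕ) : ℝ) := by
    have : 1 ≤ p / 2 - 1 := by omega
    exact_mod_cast Nat.lt_of_lt_of_le Nat.zero_lt_one this
  rw [div_le_iff₀ hkpos]
  calc ((n.choose 2 : ℕ) : ℝ) ≤ (((p / 2 - 1) * distinctDists V : ℕ) : ℝ) := by
        exact_mod_cast hnat
    _ = (distinctDists V : ℝ) * ((p / 2 - 1 : ℕ) : ℝ) := by push_cast; ring
end

section
/- Let d, t ≥ 1, let v₁, …, v_n be n distinct points in ℝ^d, and let E be a relation on ordered pairs such that there exist s ≤ t polynomials g₁, …, g_s in 2d real variables of degree at most t and a Boolean function Φ : {0,1}^s → {0,1} with: for all 1 ≤ i < j ≤ n, (v_i, v_j) ∈ E ⇔ Φ(𝟙[g₁(v_i, v_j) ≥ 0], …, 𝟙[g_s(v_i, v_j) ≥ 0]) = 1. Define V* = {(v_i, i) : 1 ≤ i ≤ n} ⊆ ℝ^{d+1}, where (v_i, i) denotes the point whose first d coordinates are those of v_i and whose last coordinate is i. Then there exists a symmetric semi-algebraic relation E* on V* of complexity at most 2t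 + 2 such that for all 1 ≤ i < j ≤ n: ((v_i, i), (v_j, j)) ∈ E* if and only if (v_i, v_j) ∈ E. -/
/-! The last coordinate of a point of `V*` is its index, so a pair of distinct points of `V*`
can be put in index order by the sign of `x_{d+1} - y_{d+1}`. Let `E*(x, y)` hold when `Φ` holds
on the signs of `g` at the pair in that order. Then `E*` is symmetric by construction, and it is
semi-algebraic with the `2s + 1` polynomials `g(x', y')`, `g(y', x')`, `x_{d+1} - y_{d+1}`
(`x'` is `x` with its last coordinate dropped): the Boolean function reads the last sign to pick
which block of `s` signs it passes to `Φ`. -/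

open scoped Classical

/-- `E` is a symmetric relation on the points of `V`. -/
def SymmetricOn {α : Type*} (V : Finset α) (E : α → α → Prop) : Prop :=
  ∀ u ∈ V, ∀ v ∈ V, (E u v ↔ E v u)

/-- `E` is a semi-algebraic relation of complexity at most `t` on the point set
`V ⊆ ℝ^d`. -/
def SemialgebraicOn (d t : ℕ) (V : Finset (Fin d → ℝ))
    (E : (Fin d → ℝ) → (Fin d → ℝ) → Prop) : Prop :=
  ∃ s : ℕ, s ≤ t ∧
    ∃ (g : Fin s → MvPolynomial (Fin (d + d)) ℝ) (Φ : (Fin s → Bool) → Bool),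
      (∀ i, (g i).totalDegree ≤ t) ∧
      ∀ u ∈ V, ∀ v ∈ V, u ≠ v →
        (E u v ↔
          Φ (fun i => decide (0 ≤ MvPolynomial.eval (Fin.append u v) (g i))) = true)

open MvPolynomial

theorem Fin.comp_append {α β : Type*} {m n : ℕ} (f : α → β) (a : Fin m → α)
    (b : Fin n → α) :
    f ∘ Fin.append a b = Fin.append (f ∘ a) (f ∘ b) := by
  funext k
  refine Fin.addCases (fun k => ?_) (fun k => ?_) k <;> simp

section

variable {R : Type*} [CommSemiring R] {d : ℕ}

noncomputable def renameInit (g : MvPolynomial (Fin (d + d)) R) :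
    MvPolynomial (Fin ((d + 1) + (d + 1))) R :=
  rename (Fin.append (Fin.castAdd (d + 1) ∘ Fin.castSucc) (Fin.natAdd (d + 1) ∘ Fin.castSucc)) g

noncomputable def renameInitSwap (g : MvPolynomial (Fin (d + d)) R) :
    MvPolynomial (Fin ((d + 1) + (d + 1))) R :=
  rename (Fin.append (Fin.natAdd (d + 1) ∘ Fin.castSucc) (Fin.castAdd (d + 1) ∘ Fin.castSucc)) g

theorem eval_renameInit (g : MvPolynomial (Fin (d + d)) R) (x y : Fin (d + 1) → R) :
    eval (Fin.append x y) (renameInit g) = eval (Fin.append (Fin.init x) (Fin.init y)) g := by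
  rw [renameInit, eval_rename, Fin.comp_append]
  simp only [Function.comp_def, Fin.append_left, Fin.append_right]
  rfl

theorem eval_renameInitSwap (g : MvPolynomial (Fin (d + d)) R) (x y : Fin (d + 1) → R) :
    eval (Fin.append x y) (renameInitSwap g) =
      eval (Fin.append (Fin.init y) (Fin.init x)) g := by
  rw [renameInitSwap, eval_rename, Fin.comp_append]
  simp only [Function.comp_def, Fin.append_left, Fin.append_right]
  rfl

end

section

variable {R : Type*} [CommRing R] {d s : ℕ}

variable (R d) in
noncomputable def lastCoordDiff : MvPolynomial (Fin ((d + 1) + (d + 1))) R :=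
  X (Fin.castAdd (d + 1) (Fin.last d)) - X (Fin.natAdd (d + 1) (Fin.last d))

theorem eval_lastCoordDiff (x y : Fin (d + 1) → R) :
    eval (Fin.append x y) (lastCoordDiff R d) = x (Fin.last d) - y (Fin.last d) := by
  rw [lastCoordDiff, map_sub, eval_X, eval_X, Fin.append_left, Fin.append_right]

theorem totalDegree_lastCoordDiff_le [Nontrivial R] : (lastCoordDiff R d).totalDegree ≤ 1 :=
  (totalDegree_sub _ _).trans (max_le (totalDegree_X _).le (totalDegree_X _).le)

noncomputable def symmetrizePolys (g : Fin s → MvPolynomial (Fin (d + d)) R) :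
    Fin (s + s + 1) → MvPolynomial (Fin ((d + 1) + (d + 1))) R :=
  Fin.snoc (Fin.append (renameInit ∘ g) (renameInitSwap ∘ g)) (lastCoordDiff R d)

theorem totalDegree_symmetrizePolys_le [Nontrivial R] (g : Fin s → MvPolynomial (Fin (d + d)) R)
    {t : ℕ} (hg : ∀ k, (g k).totalDegree ≤ t) (k : Fin (s + s + 1)) :
    (symmetrizePolys g k).totalDegree ≤ t + 1 := by
  refine Fin.lastCases ?_ (fun k => Fin.addCases (fun k => ?_) (fun k => ?_) k) k
  all_goals simp only [symmetrizePolys, Fin.snoc_last, Fin.snoc_castSucc, Fin.append_left,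
    Fin.append_right, Function.comp_apply, renameInit, renameInitSwap]
  · exact totalDegree_lastCoordDiff_le.trans (Nat.le_add_left 1 t)
  · exact (totalDegree_rename_le _ _).trans ((hg k).trans t.le_succ)
  · exact (totalDegree_rename_le _ _).trans ((hg k).trans t.le_succ)

end

section

variable {R : Type*} [CommRing R] [LinearOrder R] {d s : ℕ}

noncomputable def signVector {σ ι : Type*} (g : ι → MvPolynomial σ R) (z : σ → R) :
    ι → Bool :=
  fun k => decide (0 ≤ eval z (g k))

def symmetrizeRel (g : Fin s → MvPolynomial (Fin (d + d)) R) (Φ : (Fin s → Bool) → Bool)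
    (x y : Fin (d + 1) → R) : Prop :=
  (x (Fin.last d) < y (Fin.last d) ∧ Φ (signVector g (Fin.append (Fin.init x) (Fin.init y)))) ∨
    (y (Fin.last d) < x (Fin.last d) ∧ Φ (signVector g (Fin.append (Fin.init y) (Fin.init x))))

def symmetrizeBool (Φ : (Fin s → Bool) → Bool) (b : Fin (s + s + 1) → Bool) : Bool :=
  if b (Fin.last _) then Φ (fun k => b (Fin.natAdd s k).castSucc)
  else Φ (fun k => b (Fin.castAdd s k).castSucc)

theorem symmetrizeBool_snoc_append (Φ : (Fin s → Bool) → Bool) (p q : Fin s → Bool)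
    (c : Bool) :
    symmetrizeBool Φ (Fin.snoc (Fin.append p q) c) = if c then Φ q else Φ p := by
  simp only [symmetrizeBool, Fin.snoc_last, Fin.snoc_castSucc, Fin.append_left, Fin.append_right]

variable (g : Fin s → MvPolynomial (Fin (d + d)) R) (Φ : (Fin s → Bool) → Bool)

theorem symmetrizeRel_comm (x y : Fin (d + 1) → R) :
    symmetrizeRel g Φ x y ↔ symmetrizeRel g Φ y x :=
  or_comm

theorem symmetrizeRel_snoc_of_lt {u w : Fin d → R} {a b : R} (hab : a < b) :
    symmetrizeRel g Φ (Fin.snoc u a) (Fin.snoc w b) ↔ Φ (signVector g (Fin.append u w)) := by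
  simp [symmetrizeRel, Fin.init_snoc, hab, hab.not_gt]

theorem signVector_symmetrizePolys (x y : Fin (d + 1) → R) :
    signVector (symmetrizePolys g) (Fin.append x y) =
      Fin.snoc (Fin.append (signVector g (Fin.append (Fin.init x) (Fin.init y)))
        (signVector g (Fin.append (Fin.init y) (Fin.init x))))
        (decide (0 ≤ x (Fin.last d) - y (Fin.last d))) := by
  funext k
  refine Fin.lastCases ?_ (fun k => Fin.addCases (fun k => ?_) (fun k => ?_) k) k
  all_goals simp only [signVector, symmetrizePolys, Fin.snoc_last, Fin.snoc_castSucc,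
    Fin.append_left, Fin.append_right, Function.comp_apply, eval_renameInit, eval_renameInitSwap,
    eval_lastCoordDiff]

theorem symmetrizeRel_iff_symmetrizeBool [IsOrderedAddMonoid R] {x y : Fin (d + 1) → R}
    (hxy : x (Fin.last d) ≠ y (Fin.last d)) :
    symmetrizeRel g Φ x y ↔
      symmetrizeBool Φ (signVector (symmetrizePolys g) (Fin.append x y)) := by
  rw [signVector_symmetrizePolys, symmetrizeBool_snoc_append]
  rcases hxy.lt_or_gt with h | h <;>
    simp [symmetrizeRel, sub_nonneg, h, h.le, h.not_ge, h.not_gt]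

end

theorem symmetrize_semialgebraic_relation_general (d t n : ℕ)
    (v : Fin n → (Fin d → ℝ))
    (E : (Fin d → ℝ) → (Fin d → ℝ) → Prop)
    (hE : ∃ s : ℕ, s ≤ t ∧
      ∃ (g : Fin s → MvPolynomial (Fin (d + d)) ℝ) (Φ : (Fin s → Bool) → Bool),
        (∀ i, (g i).totalDegree ≤ t) ∧
        ∀ i j : Fin n, i < j →
          (E (v i) (v j) ↔
            Φ (fun k =>
              decide (0 ≤ MvPolynomial.eval (Fin.append (v i) (v j)) (g k))) = true)) :
    ∃ Estar : (Fin (d + 1) → ℝ) → (Fin (d + 1) → ℝ) → Prop,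
      SymmetricOn
        (Finset.image (fun i : Fin n => Fin.snoc (v i) ((i : ℕ) : ℝ)) Finset.univ)
        Estar ∧
      SemialgebraicOn (d + 1) (2 * t + 2)
        (Finset.image (fun i : Fin n => Fin.snoc (v i) ((i : ℕ) : ℝ)) Finset.univ)
        Estar ∧
      ∀ i j : Fin n, i < j →
        (Estar (Fin.snoc (v i) ((i : ℕ) : ℝ)) (Fin.snoc (v j) ((j : ℕ) : ℝ)) ↔
          E (v i) (v j)) := by
  obtain ⟨s, hs, g, Φ, hg, hE⟩ := hE
  refine ⟨symmetrizeRel g Φ, fun x _ y _ => symmetrizeRel_comm g Φ x y,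
    ⟨s + s + 1, by omega, symmetrizePolys g, symmetrizeBool Φ,
      fun k => (totalDegree_symmetrizePolys_le g hg k).trans (by omega), ?_⟩,
    fun i j hij =>
      (symmetrizeRel_snoc_of_lt g Φ (by exact_mod_cast hij)).trans (hE i j hij).symm⟩
  simp only [Finset.mem_image, Finset.mem_univ, true_and]
  rintro _ ⟨i, rfl⟩ _ ⟨j, rfl⟩ hne
  refine symmetrizeRel_iff_symmetrizeBool g Φ ?_
  simp only [Fin.snoc_last, ne_eq, Nat.cast_inj, Fin.val_inj]
  rintro rfl
  exact hne rfl

/-- Symmetrization of an ordered semi-algebraic relation: given distinct points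
`v₁, …, v_n ∈ ℝ^d` and a relation `E` on ordered pairs defined by `s ≤ t` polynomials
of degree at most `t` and a Boolean function, the lifted point set
`V* = {(v_i, i)} ⊆ ℝ^{d+1}` carries a symmetric semi-algebraic relation `E*` of
complexity at most `2t + 2` with `((v_i,i),(v_j,j)) ∈ E* ↔ (v_i,v_j) ∈ E` for
`i < j`. -/
theorem symmetrize_semialgebraic_relation (d t n : ℕ) (hd : 1 ≤ d) (ht : 1 ≤ t)
    (v : Fin n → (Fin d → ℝ)) (hv : Function.Injective v)
    (E : (Fin d → ℝ) → (Fin d → ℝ) → Prop)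
    (hE : ∃ s : ℕ, s ≤ t ∧
      ∃ (g : Fin s → MvPolynomial (Fin (d + d)) ℝ) (Φ : (Fin s → Bool) → Bool),
        (∀ i, (g i).totalDegree ≤ t) ∧
        ∀ i j : Fin n, i < j →
          (E (v i) (v j) ↔
            Φ (fun k =>
              decide (0 ≤ MvPolynomial.eval (Fin.append (v i) (v j)) (g k))) = true)) :
    ∃ Estar : (Fin (d + 1) → ℝ) → (Fin (d + 1) → ℝ) → Prop,
      SymmetricOn
        (Finset.image (fun i : Fin n => Fin.snoc (v i) ((i : ℕ) : ℝ)) Finset.univ)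
        Estar ∧
      SemialgebraicOn (d + 1) (2 * t + 2)
        (Finset.image (fun i : Fin n => Fin.snoc (v i) ((i : ℕ) : ℝ)) Finset.univ)
        Estar ∧
      ∀ i j : Fin n, i < j →
        (Estar (Fin.snoc (v i) ((i : ℕ) : ℝ)) (Fin.snoc (v j) ((j : ℕ) : ℝ)) ↔
          E (v i) (v j)) :=
  symmetrize_semialgebraic_relation_general d t n v E hE
end
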